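/- Let μ be a non-integer real number and let X be an integer-valued random variable with E[X] = μ. Then E[X²] ≥ (μ − ⌊μ⌋)·⌈μ⌉² + (⌈μ⌉ − μ)·⌊μ⌋², with equality if and only if X is supported on {⌊μ⌋, ⌈μ⌉}. -/
import Mathlib


open MeasureTheory

theorem second_moment_lower_bound_noninteger_mean
    {Ω : Type*} [MeasurableSpace Ω] (μ : Measure Ω) [IsProbabilityMeasure μ]
    (X : Ω → ℤ) (m : ℝ) (hm : ∀ z : ℤ, m ≠ (z : ℝ))
    (hX : Integrable (fun ω => (X ω : ℝ)) μ)
    (hX2 : Integrable (fun ω => (X ω : ℝ) ^ 2) μ)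
    (hmean : ∫ ω, (X ω : ℝ) ∂μ = m) :
    (m - (⌊m⌋ : ℝ)) * (⌈m⌉ : ℝ) ^ 2 + ((⌈m⌉ : ℝ) - m) * (⌊m⌋ : ℝ) ^ 2
        ≤ ∫ ω, (X ω : ℝ) ^ 2 ∂μ ∧
      ((∫ ω, (X ω : ℝ) ^ 2 ∂μ) =
          (m - (⌊m⌋ : ℝ)) * (⌈m⌉ : ℝ) ^ 2 + ((⌈m⌉ : ℝ) - m) * (⌊m⌋ : ℝ) ^ 2 ↔
        μ {ω | X ω = ⌊m⌋ ∨ X ω = ⌈m⌉} = 1) := by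
  -- ⌈m⌉ = ⌊m⌋ + 1 since m is not an integer
  have hflt : (⌊m⌋ : ℝ) < m := lt_of_le_of_ne (Int.floor_le m) (fun h => hm ⌊m⌋ h.symm)
  have hceil : (⌈m⌉ : ℤ) = ⌊m⌋ + 1 := by
    have h1 : ⌈m⌉ ≤ ⌊m⌋ + 1 := Int.ceil_le_floor_add_one m
    have h2 : ⌊m⌋ < ⌈m⌉ := by
      have : (⌊m⌋ : ℝ) < (⌈m⌉ : ℝ) := lt_of_lt_of_le hflt (Int.le_ceil m)
      exact_mod_cast this
    omega
  set f : ℝ := (⌊m⌋ : ℝ) with hf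
  have hcR : (⌈m⌉ : ℝ) = f + 1 := by rw [hceil]; push_cast; ring
  -- pointwise nonneg function
  set g : Ω → ℝ := fun ω => ((X ω : ℝ) - f) * ((X ω : ℝ) - (f + 1)) with hg
  have hg_nonneg : ∀ ω, 0 ≤ g ω := by
    intro ω
    simp only [hg]
    rcases le_or_gt (X ω) ⌊m⌋ with h | h
    · have h1 : (X ω : ℝ) ≤ f := by rw [hf]; exact_mod_cast h
      nlinarith
    · have h1 : f + 1 ≤ (X ω : ℝ) := by rw [hf]; exact_mod_cast h
      nlinarith
  have hg_eq : g = fun ω => (X ω : ℝ) ^ 2 - (2 * f + 1) * (X ω : ℝ) + f * (f + 1) := by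
    funext ω; simp only [hg]; ring
  have hg_int : Integrable g μ := by
    rw [hg_eq]
    exact (hX2.sub (hX.const_mul (2 * f + 1))).add (integrable_const (f * (f + 1)))
  have hg_integral : ∫ ω, g ω ∂μ = (∫ ω, (X ω : ℝ) ^ 2 ∂μ) - (2 * f + 1) * m + f * (f + 1) := by
    have hI1 : Integrable (fun ω => (X ω : ℝ) ^ 2 - (2 * f + 1) * (X ω : ℝ)) μ :=
      hX2.sub (hX.const_mul (2 * f + 1))
    rw [hg_eq]
    simp only []
    rw [integral_add hI1 (integrable_const _),
      integral_sub hX2 (hX.const_mul (2 * f + 1)), MeasureTheory.integral_const_mul, hmean,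
      integral_const]
    simp
  have htarget : (m - (⌊m⌋ : ℝ)) * (⌈m⌉ : ℝ) ^ 2 + ((⌈m⌉ : ℝ) - m) * (⌊m⌋ : ℝ) ^ 2
      = (2 * f + 1) * m - f * (f + 1) := by
    rw [hcR, hf]; ring
  constructor
  · have h0 : 0 ≤ ∫ ω, g ω ∂μ := integral_nonneg hg_nonneg
    rw [hg_integral] at h0
    rw [htarget]; linarith
  · rw [htarget]
    have hzero : (∫ ω, (X ω : ℝ) ^ 2 ∂μ) = (2 * f + 1) * m - f * (f + 1) ↔
        ∫ ω, g ω ∂μ = 0 := by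
      rw [hg_integral]; constructor <;> intro h <;> linarith
    rw [hzero, integral_eq_zero_iff_of_nonneg hg_nonneg hg_int]
    -- g = 0 a.e. ↔ X ∈ {⌊m⌋, ⌈m⌉} a.e.
    have hpt : ∀ ω, g ω = 0 ↔ (X ω = ⌊m⌋ ∨ X ω = ⌈m⌉) := by
      intro ω
      simp only [hg, mul_eq_zero, sub_eq_zero]
      constructor
      · rintro (h | h)
        · left; rw [hf] at h; exact_mod_cast h
        · right; rw [← hcR] at h; exact_mod_cast h
      · rintro (h | h)
        · left; rw [hf]; exact_mod_cast h
        · right; rw [← hcR]; exact_mod_cast h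
    have hS : {ω | X ω = ⌊m⌋ ∨ X ω = ⌈m⌉} = (fun ω => (X ω : ℝ)) ⁻¹' {f, f + 1} := by
      ext ω
      simp only [Set.mem_setOf_eq, Set.mem_preimage, Set.mem_insert_iff, Set.mem_singleton_iff,
        ← hpt ω, hg, mul_eq_zero, sub_eq_zero]
    have hSnull : NullMeasurableSet {ω | X ω = ⌊m⌋ ∨ X ω = ⌈m⌉} μ := by
      rw [hS]
      exact hX.aemeasurable.nullMeasurable ((measurableSet_singleton (f + 1)).insert f)
    have hset : {ω | ¬ g ω = (0 : Ω → ℝ) ω} = {ω | X ω = ⌊m⌋ ∨ X ω = ⌈m⌉}ᶜ := by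
      ext ω; simp [hpt ω]
    rw [Filter.EventuallyEq, ae_iff, hset]
    have hSle : μ {ω | X ω = ⌊m⌋ ∨ X ω = ⌈m⌉} ≤ 1 := prob_le_one
    have hcompl : μ ({ω | X ω = ⌊m⌋ ∨ X ω = ⌈m⌉}ᶜ)
        = 1 - μ {ω | X ω = ⌊m⌋ ∨ X ω = ⌈m⌉} := by
      rw [measure_compl₀ hSnull (measure_ne_top μ _), measure_univ]
    rw [hcompl, tsub_eq_zero_iff_le]
    exact ⟨fun h => le_antisymm hSle h, fun h => h.ge⟩
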